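/- Let M ∈ ℝ^{p₁×p₂} with rank-r factor U ∈ ℝ^{p₁×r} satisfying UᵀU = I_r and Incoh(U) ≤ √μ. For any index ω = (j,k) ∈ [p₁]×[p₂], define Z_ω = Uᵀ(p₁p₂ 𝒫_ω(M) − M), where 𝒫_ω(M) zeroes out all entries except entry ω. Then ‖Z_ω‖_op ≤ 2√(μ p₂ r) · √(p₁p₂) · ‖M‖_{ℓ∞}, and the second-moment bounds 𝔼[Z_ω Z_ωᵀ] ⪯ p₁p₂²‖M‖_{ℓ∞}² I_r and 𝔼[Z_ωᵀ Z_ω] ⪯ μ r p₁ p₂ ‖M‖_{ℓ∞}² I_{p₂} hold when ω is drawn uniformly from [p₁]×[p₂]. -/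

import Mathlib

open Matrix

noncomputable def frobNorm {ι κ : Type*} [Fintype ι] [Fintype κ] (A : Matrix ι κ ℝ) : ℝ :=
  Real.sqrt (∑ i, ∑ j, (A i j) ^ 2)

noncomputable def rowNorm {ι κ : Type*} [Fintype κ] (A : Matrix ι κ ℝ) (i : ι) : ℝ :=
  Real.sqrt (∑ j, (A i j) ^ 2)

noncomputable def twoInfNorm {ι κ : Type*} [Fintype ι] [Fintype κ] (A : Matrix ι κ ℝ) : ℝ :=
  ⨆ i, rowNorm A i

noncomputable def linfNorm {ι κ : Type*} [Fintype ι] [Fintype κ] (A : Matrix ι κ ℝ) : ℝ :=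
  ⨆ i, ⨆ j, |A i j|

noncomputable def opNorm {ι κ : Type*} [Fintype ι] [Fintype κ] (A : Matrix ι κ ℝ) : ℝ :=
  sSup {c : ℝ | ∃ x : κ → ℝ, (∑ j, (x j) ^ 2) ≤ 1 ∧
    c = Real.sqrt (∑ i, (∑ j, A i j * x j) ^ 2)}

noncomputable def sigmaMinPos {ι κ : Type*} [Fintype ι] [Fintype κ] (A : Matrix ι κ ℝ) : ℝ :=
  sInf {c : ℝ | ∃ y : ι → ℝ, (∑ j, (Aᵀ.mulVec y j) ^ 2) = 1 ∧
    c = Real.sqrt (∑ i, (A.mulVec (Aᵀ.mulVec y) i) ^ 2)}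

noncomputable def chordalDist {ι : Type*} [Fintype ι] {r : ℕ} (U V : Matrix ι (Fin r) ℝ) : ℝ :=
  sInf {c : ℝ | ∃ Q : Matrix (Fin r) (Fin r) ℝ, Qᵀ * Q = 1 ∧ c = frobNorm (U * Q - V)}

noncomputable def incoh {ι κ : Type*} [Fintype ι] [Fintype κ] (A : Matrix ι κ ℝ) : ℝ :=
  Real.sqrt ((Fintype.card ι : ℝ) / (Fintype.card κ)) * twoInfNorm A

/-!
The rescaled sample `p₁p₂ 𝒫_ω(M)` is an unbiased estimator of `M`, so `Z_ω` is centred and each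
second moment is bounded by the uncentred one. These are sums over single entries:
`∑_ω ‖Z_ωᵀ x‖² ≤ (p₁p₂)² p₂ ‖M‖²_{ℓ∞} ‖Ux‖²` with `‖Ux‖ = ‖x‖`, and
`∑_ω ‖Z_ω y‖² ≤ (p₁p₂)² ‖M‖²_{ℓ∞} ‖U‖²_F ‖y‖²` with `‖U‖²_F = r`. For the operator norm, the
sampled part of `Z_ω x` is a multiple of a row of `U`, whose squared norm incoherence bounds by
`μr/p₁`, and `UᵀMx` is bounded through Frobenius norms. Orthonormality forces `μ ≥ 1` (the rows of
`U` have mean squared norm `r/p₁`), which absorbs the remaining constants.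
-/

lemma inv_mul_sq_mul {G₀ : Type*} [CommGroupWithZero G₀] (a b : G₀) :
    a⁻¹ * (a ^ 2 * b) = a * b := by
  rw [sq, ← mul_assoc, ← mul_assoc, inv_mul_mul_self]

section SumOfSquares

variable {m n : Type*} [Fintype m] [Fintype n]

lemma dotProduct_self_eq_sum_sq (v : n → ℝ) : v ⬝ᵥ v = ∑ i, v i ^ 2 := by
  simp only [dotProduct, sq]

lemma dotProduct_self_nonneg (v : n → ℝ) : 0 ≤ v ⬝ᵥ v := by
  simpa using dotProduct_self_star_nonneg v

lemma sub_dotProduct_sub_le (a b : n → ℝ) :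
    (a - b) ⬝ᵥ (a - b) ≤ 2 * (a ⬝ᵥ a) + 2 * (b ⬝ᵥ b) := by
  simp only [dotProduct_self_eq_sum_sq, Finset.mul_sum, ← Finset.sum_add_distrib]
  exact Finset.sum_le_sum fun i _ => by
    simp only [Pi.sub_apply]; nlinarith [sq_nonneg (a i + b i)]

lemma sum_sub_dotProduct_sub_le {Ω : Type*} [Fintype Ω] (a : Ω → n → ℝ) (b : n → ℝ)
    (h : ∑ ω, a ω = (Fintype.card Ω : ℝ) • b) :
    ∑ ω, (a ω - b) ⬝ᵥ (a ω - b) ≤ ∑ ω, a ω ⬝ᵥ a ω := by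
  have hexp : ∑ ω, (a ω - b) ⬝ᵥ (a ω - b)
      = ∑ ω, a ω ⬝ᵥ a ω - 2 * ((∑ ω, a ω) ⬝ᵥ b) + Fintype.card Ω * (b ⬝ᵥ b) := by
    simp only [sub_dotProduct, dotProduct_sub, Finset.sum_sub_distrib, sum_dotProduct,
      Finset.sum_const, Finset.card_univ, nsmul_eq_mul, dotProduct_comm b]
    ring
  rw [hexp, h, smul_dotProduct, smul_eq_mul]
  nlinarith [dotProduct_self_nonneg b, (Fintype.card Ω).cast_nonneg (α := ℝ)]

lemma frobNorm_sq (A : Matrix m n ℝ) : frobNorm A ^ 2 = ∑ i, ∑ j, A i j ^ 2 :=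
  Real.sq_sqrt (by positivity)

lemma mulVec_dotProduct_mulVec_le (A : Matrix m n ℝ) (x : n → ℝ) :
    (A *ᵥ x) ⬝ᵥ (A *ᵥ x) ≤ frobNorm A ^ 2 * (x ⬝ᵥ x) := by
  rw [frobNorm_sq, dotProduct_self_eq_sum_sq, dotProduct_self_eq_sum_sq, Finset.sum_mul]
  exact Finset.sum_le_sum fun i _ => Finset.sum_mul_sq_le_sq_mul_sq Finset.univ (A i) x

lemma dotProduct_mul_transpose_mulVec (A : Matrix m n ℝ) (x : m → ℝ) :
    x ⬝ᵥ (A * Aᵀ) *ᵥ x = (Aᵀ *ᵥ x) ⬝ᵥ (Aᵀ *ᵥ x) := by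
  rw [← mulVec_mulVec, dotProduct_mulVec, mulVec_transpose]

lemma opNorm_le_of_dotProduct_mulVec_le {A : Matrix m n ℝ} {B : ℝ} (hB : 0 ≤ B)
    (h : ∀ x, x ⬝ᵥ x ≤ 1 → (A *ᵥ x) ⬝ᵥ (A *ᵥ x) ≤ B ^ 2) : opNorm A ≤ B := by
  refine Real.sSup_le ?_ hB
  rintro _ ⟨x, hx, rfl⟩
  rw [← dotProduct_self_eq_sum_sq] at hx
  have hAx := h x hx
  rw [dotProduct_self_eq_sum_sq] at hAx
  exact (Real.sqrt_le_left hB).2 hAx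

lemma posSemidef_smul_one_sub_smul_sum_mul_transpose {Ω : Type*} [Fintype Ω] [DecidableEq m]
    (Z : Ω → Matrix m n ℝ) (a c : ℝ)
    (h : ∀ x, c⁻¹ * ∑ ω, ((Z ω)ᵀ *ᵥ x) ⬝ᵥ ((Z ω)ᵀ *ᵥ x) ≤ a * (x ⬝ᵥ x)) :
    (a • (1 : Matrix m m ℝ) - c⁻¹ • ∑ ω, Z ω * (Z ω)ᵀ).PosSemidef := by
  rw [posSemidef_iff_dotProduct_mulVec]
  refine ⟨?_, fun x => ?_⟩
  · simp [IsHermitian, transpose_sum, transpose_mul]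
  · simpa [sub_mulVec, smul_mulVec, sum_mulVec, dotProduct_sum, dotProduct_mul_transpose_mulVec]
      using h x

end SumOfSquares

lemma rowNorm_sq {ι ρ : Type*} [Fintype ρ] (A : Matrix ι ρ ℝ) (j : ι) :
    rowNorm A j ^ 2 = ∑ i, A j i ^ 2 :=
  Real.sq_sqrt (by positivity)

section Orthonormal

variable {ι ρ : Type*} [Fintype ι] [Fintype ρ]

lemma sum_rowNorm_sq (A : Matrix ι ρ ℝ) : ∑ j, rowNorm A j ^ 2 = frobNorm A ^ 2 := by
  simp only [rowNorm_sq, frobNorm_sq]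

lemma frobNorm_transpose (A : Matrix ι ρ ℝ) : frobNorm Aᵀ = frobNorm A := by
  simp only [frobNorm, transpose_apply]
  rw [Finset.sum_comm]

lemma frobNorm_sq_of_transpose_mul_self [DecidableEq ρ] {U : Matrix ι ρ ℝ} (hU : Uᵀ * U = 1) :
    frobNorm U ^ 2 = Fintype.card ρ := by
  have hcol : ∀ i, ∑ j, U j i ^ 2 = 1 := fun i => by
    simpa [mul_apply, sq] using congrFun (congrFun hU i) i
  rw [← frobNorm_transpose, frobNorm_sq]
  simp [hcol]

lemma mulVec_dotProduct_mulVec_of_transpose_mul_self [DecidableEq ρ] {U : Matrix ι ρ ℝ}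
    (hU : Uᵀ * U = 1) (x : ρ → ℝ) : (U *ᵥ x) ⬝ᵥ (U *ᵥ x) = x ⬝ᵥ x := by
  rw [dotProduct_mulVec, ← mulVec_transpose, mulVec_mulVec, hU, one_mulVec, dotProduct_comm]

lemma card_mul_rowNorm_sq_le_of_incoh_le {U : Matrix ι ρ ℝ} {s : ℝ} (hs : incoh U ≤ s)
    (j : ι) : Fintype.card ι * rowNorm U j ^ 2 ≤ s ^ 2 * Fintype.card ρ := by
  rcases isEmpty_or_nonempty ρ with hρ | hρ
  · simp [rowNorm]
  have hρ0 : (0 : ℝ) < Fintype.card ρ := by exact_mod_cast Fintype.card_pos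
  have hrow : Real.sqrt (Fintype.card ι / Fintype.card ρ) * rowNorm U j ≤ s :=
    (mul_le_mul_of_nonneg_left (le_ciSup (Set.finite_range (rowNorm U)).bddAbove j)
      (Real.sqrt_nonneg _)).trans hs
  have hsq := pow_le_pow_left₀ (mul_nonneg (Real.sqrt_nonneg _) (Real.sqrt_nonneg _)) hrow 2
  rw [mul_pow, Real.sq_sqrt (by positivity), div_mul_eq_mul_div, div_le_iff₀ hρ0] at hsq
  exact hsq

lemma one_le_of_incoh_le_sqrt [DecidableEq ρ] [Nonempty ρ] {U : Matrix ι ρ ℝ}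
    (hU : Uᵀ * U = 1) {μ : ℝ} (h : incoh U ≤ Real.sqrt μ) : 1 ≤ μ := by
  have hρ0 : (0 : ℝ) < Fintype.card ρ := by exact_mod_cast Fintype.card_pos
  have hsum := Finset.sum_le_sum (s := Finset.univ) fun j _ =>
    card_mul_rowNorm_sq_le_of_incoh_le h j
  rw [← Finset.mul_sum, sum_rowNorm_sq, frobNorm_sq_of_transpose_mul_self hU] at hsum
  simp only [Finset.sum_const, Finset.card_univ, nsmul_eq_mul] at hsum
  have hι : Nonempty ι := by
    by_contra hι
    rw [not_nonempty_iff] at hι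
    exact hρ0.ne (by simpa [← sum_rowNorm_sq] using frobNorm_sq_of_transpose_mul_self hU)
  have hι0 : (0 : ℝ) < Fintype.card ι := by exact_mod_cast Fintype.card_pos
  have hsq : 1 ≤ Real.sqrt μ ^ 2 := by nlinarith [mul_pos hι0 hρ0]
  exact Real.one_le_sqrt.mp (by nlinarith [Real.sqrt_nonneg μ])

lemma card_mul_rowNorm_sq_le_of_incoh_le_sqrt [DecidableEq ρ] {U : Matrix ι ρ ℝ}
    (hU : Uᵀ * U = 1) {μ : ℝ} (h : incoh U ≤ Real.sqrt μ) (j : ι) :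
    Fintype.card ι * rowNorm U j ^ 2 ≤ μ * Fintype.card ρ := by
  rcases isEmpty_or_nonempty ρ with hρ | hρ
  · simp [rowNorm]
  simpa [Real.sq_sqrt (zero_le_one.trans (one_le_of_incoh_le_sqrt hU h))] using
    card_mul_rowNorm_sq_le_of_incoh_le h j

lemma card_le_mul_card_of_incoh_le_sqrt [DecidableEq ρ] {U : Matrix ι ρ ℝ}
    (hU : Uᵀ * U = 1) {μ : ℝ} (h : incoh U ≤ Real.sqrt μ) :
    (Fintype.card ρ : ℝ) ≤ μ * Fintype.card ρ := by
  rcases isEmpty_or_nonempty ρ with hρ | hρ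
  · simp
  exact le_mul_of_one_le_left (Nat.cast_nonneg _) (one_le_of_incoh_le_sqrt hU h)

end Orthonormal

section LinfNorm

variable {ι κ : Type*} [Fintype ι] [Fintype κ]

lemma linfNorm_nonneg (A : Matrix ι κ ℝ) : 0 ≤ linfNorm A :=
  Real.iSup_nonneg fun _ => Real.iSup_nonneg fun _ => abs_nonneg _

lemma sq_le_linfNorm_sq (A : Matrix ι κ ℝ) (i : ι) (j : κ) : A i j ^ 2 ≤ linfNorm A ^ 2 := by
  have hrow : |A i j| ≤ ⨆ j, |A i j| := le_ciSup (Set.finite_range fun j => |A i j|).bddAbove j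
  have hall : (⨆ j, |A i j|) ≤ linfNorm A :=
    le_ciSup (Set.finite_range fun i => ⨆ j, |A i j|).bddAbove i
  simpa only [sq_abs] using pow_le_pow_left₀ (abs_nonneg _) (hrow.trans hall) 2

lemma frobNorm_sq_le_linfNorm_sq (A : Matrix ι κ ℝ) :
    frobNorm A ^ 2 ≤ Fintype.card ι * Fintype.card κ * linfNorm A ^ 2 := by
  rw [frobNorm_sq]
  calc ∑ i, ∑ j, A i j ^ 2 ≤ ∑ _i : ι, ∑ _j : κ, linfNorm A ^ 2 :=
        Finset.sum_le_sum fun i _ => Finset.sum_le_sum fun j _ => sq_le_linfNorm_sq A i j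
    _ = _ := by simp [mul_assoc]

end LinfNorm

lemma transpose_mulVec_mulVec_le {ι κ ρ : Type*} [Fintype ι] [Fintype κ] [Fintype ρ]
    [DecidableEq ρ] {U : Matrix ι ρ ℝ} (hU : Uᵀ * U = 1) (M : Matrix ι κ ℝ) {x : κ → ℝ}
    (hx : x ⬝ᵥ x ≤ 1) :
    (Uᵀ *ᵥ (M *ᵥ x)) ⬝ᵥ (Uᵀ *ᵥ (M *ᵥ x))
      ≤ Fintype.card ρ * (Fintype.card ι * Fintype.card κ * linfNorm M ^ 2) := by
  have hMx : (M *ᵥ x) ⬝ᵥ (M *ᵥ x) ≤ Fintype.card ι * Fintype.card κ * linfNorm M ^ 2 :=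
    (mulVec_dotProduct_mulVec_le M x).trans <|
      (mul_le_of_le_one_right (sq_nonneg _) hx).trans (frobNorm_sq_le_linfNorm_sq M)
  calc (Uᵀ *ᵥ (M *ᵥ x)) ⬝ᵥ (Uᵀ *ᵥ (M *ᵥ x)) ≤ frobNorm Uᵀ ^ 2 * ((M *ᵥ x) ⬝ᵥ (M *ᵥ x)) :=
        mulVec_dotProduct_mulVec_le Uᵀ (M *ᵥ x)
    _ ≤ _ := by
      rw [frobNorm_transpose, frobNorm_sq_of_transpose_mul_self hU]
      exact mul_le_mul_of_nonneg_left hMx (Nat.cast_nonneg _)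

section Sampling

variable {ι κ ρ : Type*} [Fintype ι] [Fintype κ] [DecidableEq ι] [DecidableEq κ]

noncomputable def rescaledSample (M : Matrix ι κ ℝ) (ω : ι × κ) : Matrix ι κ ℝ :=
  ((Fintype.card ι : ℝ) * Fintype.card κ) • single ω.1 ω.2 (M ω.1 ω.2)

noncomputable def sampleDeviation (U : Matrix ι ρ ℝ) (M : Matrix ι κ ℝ) (ω : ι × κ) :
    Matrix ρ κ ℝ :=
  Uᵀ * (rescaledSample M ω - M)

lemma sum_rescaledSample (M : Matrix ι κ ℝ) :
    ∑ ω, rescaledSample M ω = (Fintype.card (ι × κ) : ℝ) • M := by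
  conv_rhs => rw [matrix_eq_sum_single M]
  simp only [rescaledSample, Fintype.sum_prod_type, Finset.smul_sum, Fintype.card_prod,
    Nat.cast_mul]

lemma rescaledSample_mulVec (M : Matrix ι κ ℝ) (ω : ι × κ) (y : κ → ℝ) :
    rescaledSample M ω *ᵥ y
      = Pi.single ω.1 ((Fintype.card ι : ℝ) * Fintype.card κ * M ω.1 ω.2 * y ω.2) := by
  ext
  simp [rescaledSample, single_mulVec, Pi.single, mul_assoc]

lemma transpose_rescaledSample_mulVec (M : Matrix ι κ ℝ) (ω : ι × κ) (x : ι → ℝ) :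
    (rescaledSample M ω)ᵀ *ᵥ x
      = Pi.single ω.2 ((Fintype.card ι : ℝ) * Fintype.card κ * M ω.1 ω.2 * x ω.1) := by
  ext
  simp [rescaledSample, transpose_single, single_mulVec, Pi.single, mul_assoc]

lemma transpose_mulVec_single_dotProduct_self [Fintype ρ] (A : Matrix ι ρ ℝ) (j : ι) (t : ℝ) :
    (Aᵀ *ᵥ Pi.single j t) ⬝ᵥ (Aᵀ *ᵥ Pi.single j t) = t ^ 2 * rowNorm A j ^ 2 := by
  simp only [dotProduct, mulVec_single, col_transpose, Pi.smul_apply, row_apply,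
    MulOpposite.smul_eq_mul_unop, MulOpposite.unop_op, rowNorm_sq, Finset.mul_sum]
  exact Finset.sum_congr rfl fun _ _ => by ring

lemma sampleDeviation_mulVec (U : Matrix ι ρ ℝ) (M : Matrix ι κ ℝ) (ω : ι × κ) (y : κ → ℝ) :
    sampleDeviation U M ω *ᵥ y = Uᵀ *ᵥ (rescaledSample M ω *ᵥ y) - Uᵀ *ᵥ (M *ᵥ y) := by
  simp only [sampleDeviation, ← mulVec_mulVec, sub_mulVec, mulVec_sub]

lemma transpose_sampleDeviation_mulVec [Fintype ρ] (U : Matrix ι ρ ℝ) (M : Matrix ι κ ℝ)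
    (ω : ι × κ) (x : ρ → ℝ) :
    (sampleDeviation U M ω)ᵀ *ᵥ x = (rescaledSample M ω)ᵀ *ᵥ (U *ᵥ x) - Mᵀ *ᵥ (U *ᵥ x) := by
  simp only [sampleDeviation, transpose_mul, transpose_transpose, transpose_sub, ← mulVec_mulVec,
    sub_mulVec]

end Sampling

section SecondMoments

variable {ι κ ρ : Type*} [Fintype ι] [Fintype κ] [Fintype ρ] [DecidableEq ι] [DecidableEq κ]
  [DecidableEq ρ] {U : Matrix ι ρ ℝ} (M : Matrix ι κ ℝ)

lemma sum_transpose_sampleDeviation_mulVec_le (hU : Uᵀ * U = 1) (x : ρ → ℝ) :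
    ∑ ω, ((sampleDeviation U M ω)ᵀ *ᵥ x) ⬝ᵥ ((sampleDeviation U M ω)ᵀ *ᵥ x)
      ≤ ((Fintype.card ι : ℝ) * Fintype.card κ) ^ 2 *
        (Fintype.card κ * linfNorm M ^ 2 * (x ⬝ᵥ x)) := by
  set N : ℝ := Fintype.card ι * Fintype.card κ
  set g := U *ᵥ x
  have hmean : ∑ ω, (rescaledSample M ω)ᵀ *ᵥ g = (Fintype.card (ι × κ) : ℝ) • (Mᵀ *ᵥ g) := by
    rw [← sum_mulVec, ← transpose_sum, sum_rescaledSample, transpose_smul, smul_mulVec]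
  calc ∑ ω, ((sampleDeviation U M ω)ᵀ *ᵥ x) ⬝ᵥ ((sampleDeviation U M ω)ᵀ *ᵥ x)
      ≤ ∑ ω, ((rescaledSample M ω)ᵀ *ᵥ g) ⬝ᵥ ((rescaledSample M ω)ᵀ *ᵥ g) := by
        simpa only [transpose_sampleDeviation_mulVec] using sum_sub_dotProduct_sub_le _ _ hmean
    _ = ∑ j, ∑ k, (N * M j k * g j) ^ 2 := by
        simp [transpose_rescaledSample_mulVec, Fintype.sum_prod_type, sq, N]
    _ ≤ ∑ j, ∑ _k : κ, N ^ 2 * linfNorm M ^ 2 * g j ^ 2 := by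
        gcongr with j _ k _
        rw [mul_pow, mul_pow]
        gcongr N ^ 2 * ?_ * _
        exact sq_le_linfNorm_sq M j k
    _ = N ^ 2 * (Fintype.card κ * linfNorm M ^ 2 * (x ⬝ᵥ x)) := by
        rw [← mulVec_dotProduct_mulVec_of_transpose_mul_self hU x, dotProduct_self_eq_sum_sq]
        simp only [Finset.sum_const, Finset.card_univ, nsmul_eq_mul, Finset.mul_sum]
        exact Finset.sum_congr rfl fun _ _ => by ring

lemma sum_sampleDeviation_mulVec_le (hU : Uᵀ * U = 1) (y : κ → ℝ) :
    ∑ ω, (sampleDeviation U M ω *ᵥ y) ⬝ᵥ (sampleDeviation U M ω *ᵥ y)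
      ≤ ((Fintype.card ι : ℝ) * Fintype.card κ) ^ 2 *
        (Fintype.card ρ * linfNorm M ^ 2 * (y ⬝ᵥ y)) := by
  set N : ℝ := Fintype.card ι * Fintype.card κ
  have hmean : ∑ ω, Uᵀ *ᵥ (rescaledSample M ω *ᵥ y)
      = (Fintype.card (ι × κ) : ℝ) • (Uᵀ *ᵥ (M *ᵥ y)) := by
    rw [← mulVec_sum, ← sum_mulVec, sum_rescaledSample, smul_mulVec, mulVec_smul]
  calc ∑ ω, (sampleDeviation U M ω *ᵥ y) ⬝ᵥ (sampleDeviation U M ω *ᵥ y)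
      ≤ ∑ ω, (Uᵀ *ᵥ (rescaledSample M ω *ᵥ y)) ⬝ᵥ (Uᵀ *ᵥ (rescaledSample M ω *ᵥ y)) := by
        simpa only [sampleDeviation_mulVec] using sum_sub_dotProduct_sub_le _ _ hmean
    _ = ∑ j, ∑ k, (N * M j k * y k) ^ 2 * rowNorm U j ^ 2 := by
        simp only [rescaledSample_mulVec, transpose_mulVec_single_dotProduct_self,
          Fintype.sum_prod_type, N]
    _ ≤ ∑ j, ∑ k, N ^ 2 * linfNorm M ^ 2 * y k ^ 2 * rowNorm U j ^ 2 := by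
        gcongr with j _ k _
        rw [mul_pow, mul_pow]
        gcongr N ^ 2 * ?_ * _
        exact sq_le_linfNorm_sq M j k
    _ = N ^ 2 * (Fintype.card ρ * linfNorm M ^ 2 * (y ⬝ᵥ y)) := by
        rw [← frobNorm_sq_of_transpose_mul_self hU, ← sum_rowNorm_sq, dotProduct_self_eq_sum_sq]
        simp only [Finset.mul_sum, Finset.sum_mul]
        rw [Finset.sum_comm]
        exact Finset.sum_congr rfl fun _ _ => Finset.sum_congr rfl fun _ _ => by ring

lemma transpose_mulVec_rescaledSample_mulVec_le (hU : Uᵀ * U = 1) {μ : ℝ}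
    (hInc : incoh U ≤ Real.sqrt μ) (ω : ι × κ) {x : κ → ℝ} (hx : x ⬝ᵥ x ≤ 1) :
    (Uᵀ *ᵥ (rescaledSample M ω *ᵥ x)) ⬝ᵥ (Uᵀ *ᵥ (rescaledSample M ω *ᵥ x))
      ≤ μ * Fintype.card ρ * Fintype.card ι * Fintype.card κ ^ 2 * linfNorm M ^ 2 := by
  have hx₂ : x ω.2 ^ 2 ≤ 1 := by
    refine le_trans ?_ hx
    rw [dotProduct_self_eq_sum_sq]
    exact Finset.single_le_sum (f := fun k => x k ^ 2) (fun _ _ => sq_nonneg _) (Finset.mem_univ _)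
  have hM : M ω.1 ω.2 ^ 2 * x ω.2 ^ 2 ≤ linfNorm M ^ 2 :=
    (mul_le_of_le_one_right (sq_nonneg _) hx₂).trans (sq_le_linfNorm_sq M ω.1 ω.2)
  have hrow := card_mul_rowNorm_sq_le_of_incoh_le_sqrt hU hInc ω.1
  rw [rescaledSample_mulVec, transpose_mulVec_single_dotProduct_self]
  calc ((Fintype.card ι : ℝ) * Fintype.card κ * M ω.1 ω.2 * x ω.2) ^ 2 * rowNorm U ω.1 ^ 2
      = Fintype.card ι * Fintype.card κ ^ 2 * (M ω.1 ω.2 ^ 2 * x ω.2 ^ 2) *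
          (Fintype.card ι * rowNorm U ω.1 ^ 2) := by ring
    _ ≤ Fintype.card ι * Fintype.card κ ^ 2 * linfNorm M ^ 2 * (μ * Fintype.card ρ) :=
      mul_le_mul (mul_le_mul_of_nonneg_left hM (by positivity)) hrow (by positivity)
        (by positivity)
    _ = _ := by ring

lemma opNorm_sampleDeviation_le (hU : Uᵀ * U = 1) {μ : ℝ} (hInc : incoh U ≤ Real.sqrt μ)
    (ω : ι × κ) :
    opNorm (sampleDeviation U M ω) ≤ 2 * Real.sqrt (μ * Fintype.card κ * Fintype.card ρ) *
      Real.sqrt ((Fintype.card ι : ℝ) * Fintype.card κ) * linfNorm M := by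
  set p₁ : ℝ := (Fintype.card ι : ℝ)
  set p₂ : ℝ := (Fintype.card κ : ℝ)
  set r : ℝ := (Fintype.card ρ : ℝ)
  have hp₂ : 1 ≤ p₂ := Nat.one_le_cast.mpr (Fintype.card_pos_iff.mpr ⟨ω.2⟩)
  have hr : r ≤ μ * r := card_le_mul_card_of_incoh_le_sqrt hU hInc
  have hr₀ : 0 ≤ r := Nat.cast_nonneg _
  set h := Real.sqrt (μ * p₂ * r) * Real.sqrt (p₁ * p₂) * linfNorm M
  have hh : h ^ 2 = μ * r * p₁ * p₂ ^ 2 * linfNorm M ^ 2 := by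
    rw [mul_pow, mul_pow, Real.sq_sqrt (by nlinarith), Real.sq_sqrt (by positivity)]
    ring
  have h₀ : 0 ≤ h := mul_nonneg (by positivity) (linfNorm_nonneg M)
  rw [show 2 * Real.sqrt (μ * p₂ * r) * Real.sqrt (p₁ * p₂) * linfNorm M = 2 * h by ring]
  refine opNorm_le_of_dotProduct_mulVec_le (by positivity) fun x hx => ?_
  have hsample := transpose_mulVec_rescaledSample_mulVec_le M hU hInc ω hx
  have hcenter : (Uᵀ *ᵥ (M *ᵥ x)) ⬝ᵥ (Uᵀ *ᵥ (M *ᵥ x)) ≤ h ^ 2 := by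
    have hMx₀ : 0 ≤ p₁ * p₂ * linfNorm M ^ 2 := by positivity
    calc (Uᵀ *ᵥ (M *ᵥ x)) ⬝ᵥ (Uᵀ *ᵥ (M *ᵥ x)) ≤ r * (p₁ * p₂ * linfNorm M ^ 2) :=
          transpose_mulVec_mulVec_le hU M hx
      _ ≤ (μ * r) * (p₁ * p₂ * linfNorm M ^ 2) * p₂ :=
          (mul_le_mul_of_nonneg_right hr hMx₀).trans (le_mul_of_one_le_right (by nlinarith) hp₂)
      _ = h ^ 2 := by rw [hh]; ring
  rw [sampleDeviation_mulVec]
  nlinarith [sub_dotProduct_sub_le (Uᵀ *ᵥ (rescaledSample M ω *ᵥ x)) (Uᵀ *ᵥ (M *ᵥ x))]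

lemma posSemidef_sub_mean_sampleDeviation_mul_transpose (hU : Uᵀ * U = 1) :
    (((Fintype.card ι : ℝ) * Fintype.card κ ^ 2 * linfNorm M ^ 2) • (1 : Matrix ρ ρ ℝ) -
      ((Fintype.card ι : ℝ) * Fintype.card κ)⁻¹ •
        ∑ ω, sampleDeviation U M ω * (sampleDeviation U M ω)ᵀ).PosSemidef := by
  refine posSemidef_smul_one_sub_smul_sum_mul_transpose _ _ _ fun x => ?_
  calc ((Fintype.card ι : ℝ) * Fintype.card κ)⁻¹ *
        ∑ ω, ((sampleDeviation U M ω)ᵀ *ᵥ x) ⬝ᵥ ((sampleDeviation U M ω)ᵀ *ᵥ x)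
      ≤ ((Fintype.card ι : ℝ) * Fintype.card κ)⁻¹ * (((Fintype.card ι : ℝ) * Fintype.card κ) ^ 2
          * (Fintype.card κ * linfNorm M ^ 2 * (x ⬝ᵥ x))) :=
        mul_le_mul_of_nonneg_left (sum_transpose_sampleDeviation_mulVec_le M hU x) (by positivity)
    _ = _ := by rw [inv_mul_sq_mul]; ring

lemma posSemidef_sub_mean_transpose_sampleDeviation_mul (hU : Uᵀ * U = 1) {μ : ℝ}
    (hInc : incoh U ≤ Real.sqrt μ) :
    ((μ * Fintype.card ρ * Fintype.card ι * Fintype.card κ * linfNorm M ^ 2) •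
        (1 : Matrix κ κ ℝ) - ((Fintype.card ι : ℝ) * Fintype.card κ)⁻¹ •
        ∑ ω, (sampleDeviation U M ω)ᵀ * sampleDeviation U M ω).PosSemidef := by
  have hr := card_le_mul_card_of_incoh_le_sqrt hU hInc
  have hbound : ∀ y, ((Fintype.card ι : ℝ) * Fintype.card κ)⁻¹ *
      ∑ ω, ((sampleDeviation U M ω)ᵀᵀ *ᵥ y) ⬝ᵥ ((sampleDeviation U M ω)ᵀᵀ *ᵥ y)
        ≤ μ * Fintype.card ρ * Fintype.card ι * Fintype.card κ * linfNorm M ^ 2 * (y ⬝ᵥ y) := by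
    intro y
    simp only [transpose_transpose]
    calc ((Fintype.card ι : ℝ) * Fintype.card κ)⁻¹ *
          ∑ ω, (sampleDeviation U M ω *ᵥ y) ⬝ᵥ (sampleDeviation U M ω *ᵥ y)
        ≤ ((Fintype.card ι : ℝ) * Fintype.card κ)⁻¹ * (((Fintype.card ι : ℝ) * Fintype.card κ) ^ 2
            * (Fintype.card ρ * linfNorm M ^ 2 * (y ⬝ᵥ y))) :=
          mul_le_mul_of_nonneg_left (sum_sampleDeviation_mulVec_le M hU y) (by positivity)
      _ = Fintype.card ρ * (Fintype.card ι * Fintype.card κ * linfNorm M ^ 2 * (y ⬝ᵥ y)) := by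
          rw [inv_mul_sq_mul]; ring
      _ ≤ μ * Fintype.card ρ * (Fintype.card ι * Fintype.card κ * linfNorm M ^ 2 * (y ⬝ᵥ y)) :=
          mul_le_mul_of_nonneg_right hr
            (mul_nonneg (by positivity) (dotProduct_self_nonneg y))
      _ = _ := by ring
  simpa only [transpose_transpose] using
    posSemidef_smul_one_sub_smul_sum_mul_transpose (fun ω => (sampleDeviation U M ω)ᵀ) _ _ hbound

end SecondMoments

/-- for `M ∈ ℝ^{p₁×p₂}`, orthonormal incoherent `U ∈ ℝ^{p₁×r}` and
`Z_ω = Uᵀ(p₁p₂𝒫_ω(M) − M)`, one has `‖Z_ω‖_op ≤ 2√(μp₂r)·√(p₁p₂)·‖M‖_{ℓ∞}` for every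
`ω`, and for `ω` uniform on `[p₁]×[p₂]`,
`𝔼[Z_ωZ_ωᵀ] ⪯ p₁p₂²‖M‖_{ℓ∞}² I_r` and `𝔼[Z_ωᵀZ_ω] ⪯ μrp₁p₂‖M‖_{ℓ∞}² I_{p₂}`. -/
theorem stmt18 (p₁ p₂ r : ℕ) (μ : ℝ)
    (M : Matrix (Fin p₁) (Fin p₂) ℝ) (U : Matrix (Fin p₁) (Fin r) ℝ)
    (hU : Uᵀ * U = 1) (hInc : incoh U ≤ Real.sqrt μ)
    (Z : Fin p₁ × Fin p₂ → Matrix (Fin r) (Fin p₂) ℝ)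
    (hZ : ∀ ω : Fin p₁ × Fin p₂,
      Z ω = Uᵀ * (((p₁ : ℝ) * p₂) • Matrix.single ω.1 ω.2 (M ω.1 ω.2) - M)) :
    (∀ ω, opNorm (Z ω) ≤
      2 * Real.sqrt (μ * p₂ * r) * Real.sqrt ((p₁ : ℝ) * p₂) * linfNorm M) ∧
    Matrix.PosSemidef (((p₁ : ℝ) * p₂ ^ 2 * linfNorm M ^ 2) • (1 : Matrix (Fin r) (Fin r) ℝ) -
      ((p₁ : ℝ) * p₂)⁻¹ • ∑ ω : Fin p₁ × Fin p₂, Z ω * (Z ω)ᵀ) ∧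
    Matrix.PosSemidef ((μ * r * p₁ * p₂ * linfNorm M ^ 2) • (1 : Matrix (Fin p₂) (Fin p₂) ℝ) -
      ((p₁ : ℝ) * p₂)⁻¹ • ∑ ω : Fin p₁ × Fin p₂, (Z ω)ᵀ * Z ω) := by
  obtain rfl : Z = sampleDeviation U M := funext fun ω => by
    simp [hZ, sampleDeviation, rescaledSample]
  have hop := opNorm_sampleDeviation_le M hU hInc
  have hleft := posSemidef_sub_mean_sampleDeviation_mul_transpose M hU
  have hright := posSemidef_sub_mean_transpose_sampleDeviation_mul M hU hInc
  simp only [Fintype.card_fin] at hop hleft hright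
  exact ⟨hop, hleft, hright⟩
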